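/- Let λ > 0 and d > 0 be real numbers. If for every s with 0 < s < 1 the inequality 2λ ≥ 4s(1 - s)·π²/d² + sλ holds, then d ≥ 2(√2 - 1)π/√λ. -/
import Mathlib


theorem stmt_3 (lam d : ℝ) (hlam : 0 < lam) (hd : 0 < d)
    (h : ∀ s : ℝ, 0 < s → s < 1 →
      2 * lam ≥ 4 * s * (1 - s) * Real.pi ^ 2 / d ^ 2 + s * lam) :
    d ≥ 2 * (Real.sqrt 2 - 1) * Real.pi / Real.sqrt lam := by
  have hπ := Real.pi_pos
  set s2 := Real.sqrt 2 with hs2def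
  have hs2sq : s2 ^ 2 = 2 := Real.sq_sqrt (by norm_num)
  have hs2nn : 0 ≤ s2 := Real.sqrt_nonneg 2
  have h1 : 1 < s2 := by nlinarith
  have h2 : s2 < 2 := by nlinarith
  have hs := h (2 - s2) (by linarith) (by linarith)
  have hd2 : (0:ℝ) < d ^ 2 := by positivity
  have key : 4 * (2 - s2) * (1 - (2 - s2)) * Real.pi ^ 2 ≤ s2 * lam * d ^ 2 := by
    have h' : 4 * (2 - s2) * (1 - (2 - s2)) * Real.pi ^ 2 / d ^ 2 ≤ s2 * lam := by
      linarith
    calc 4 * (2 - s2) * (1 - (2 - s2)) * Real.pi ^ 2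
        = 4 * (2 - s2) * (1 - (2 - s2)) * Real.pi ^ 2 / d ^ 2 * d ^ 2 := by
          field_simp
      _ ≤ s2 * lam * d ^ 2 := by
          exact mul_le_mul_of_nonneg_right h' hd2.le
  have hls : 0 < Real.sqrt lam := Real.sqrt_pos.mpr hlam
  have hlsq : Real.sqrt lam ^ 2 = lam := Real.sq_sqrt hlam.le
  have key2 : 4 * (s2 - 1) ^ 2 * Real.pi ^ 2 ≤ lam * d ^ 2 := by
    have heq : s2 * (4 * (s2 - 1) ^ 2 * Real.pi ^ 2)
        = 4 * (2 - s2) * (1 - (2 - s2)) * Real.pi ^ 2 := by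
      linear_combination (4 * Real.pi ^ 2 * (s2 - 1)) * hs2sq
    have hmul : s2 * (4 * (s2 - 1) ^ 2 * Real.pi ^ 2) ≤ s2 * (lam * d ^ 2) := by
      rw [heq]; linarith [key]
    exact le_of_mul_le_mul_left hmul (by linarith)
  rw [ge_iff_le, div_le_iff₀ hls]
  nlinarith [key2, hlsq, mul_pos hd hls,
    sq_nonneg (2 * (s2 - 1) * Real.pi - d * Real.sqrt lam)]
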